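/- arXiv:0802.2333 — 2 statements merged into one kernel-verified Lean document; each statement's English description precedes it below -/
import Mathlib

section
/- Let G be a finite group, p a prime, and t an element of G of order p. Let P denote the set of nontrivial elementary abelian p-subgroups A of G such that every order-p element of A is p-central in G and t normalizes A. Then the assignment f(A) = A ∩ C_G(t) satisfies: (i) f(A) is a nontrivial subgroup for every A in P; (ii) f(A) again belongs to P; (iii) f is order-preserving with respect to inclusion, satisfies f(A) ≤ A, and f(f(A)) = f(A); (iv) f is C_G(t)-equivariant, i.e., f(c A c⁻¹) = c f(A) c⁻¹ for every c in C_G(t); (v) the image of f is exactly the set of those A in P with A ≤ C_G(t). -/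
/-
The only substantial claim is (i). Conjugation by the `p`-element `t` permutes the nontrivial
`p`-group `A`; since a `p`-group acting on a set of order divisible by `p` has a number of fixed
points divisible by `p`, and `1` is fixed, some `a ≠ 1` in `A` commutes with `t`. Everything else
is lattice bookkeeping, plus the fact that `c ∈ C_G(t)` normalizes `C_G(t)`.
-/

/-- An element `z` of a group is `p`-central if it has order `p` and lies in the
center of some Sylow `p`-subgroup. -/
def IsPCentral (p : ℕ) {G : Type*} [Group G] (z : G) : Prop :=
  orderOf z = p ∧ ∃ S : Sylow p G, z ∈ (S : Subgroup G) ∧ ∀ s ∈ (S : Subgroup G), s * z = z * s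

/-- The poset of nontrivial purely `p`-central elementary abelian `p`-subgroups of `G`
normalized by the order-`p` element `t`. -/
def BensonFixedPoset (p : ℕ) {G : Type*} [Group G] (t : G) : Set (Subgroup G) :=
  {A | A ≠ ⊥ ∧ (∀ a ∈ A, ∀ b ∈ A, a * b = b * a) ∧
    (∀ a ∈ A, a ≠ 1 → orderOf a = p ∧ IsPCentral p a) ∧ t ∈ Subgroup.normalizer (A : Set G)}

open Subgroup

theorem IsPGroup.inf_centralizer_ne_bot {G : Type*} [Group G] [Finite G] {p : ℕ} [Fact p.Prime]
    {A P : Subgroup G} (hA : IsPGroup p A) (hA₀ : A ≠ ⊥) (hP : IsPGroup p P)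
    (hPA : P ≤ normalizer (A : Set G)) : A ⊓ centralizer (P : Set G) ≠ ⊥ := by
  let _ : MulDistribMulAction P A := MulDistribMulAction.compHom A (inclusion hPA)
  have hpA : p ∣ Nat.card A := hA.card_eq_or_dvd.resolve_left (mt A.eq_bot_of_card_eq hA₀)
  obtain ⟨b, hb, hb₁⟩ :=
    hP.exists_fixed_point_of_prime_dvd_card_of_fixed_point A hpA (a := 1) (fun _ ↦ smul_one _)
  have hbP : (b : G) ∈ centralizer (P : Set G) := fun g hg ↦
    mul_inv_eq_iff_eq_mul.mp (congrArg Subtype.val (hb ⟨g, hg⟩))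
  exact fun h ↦ hb₁ (Subtype.ext ((eq_bot_iff_forall _).mp h b ⟨b.2, hbP⟩).symm)

theorem isPGroup_of_orderOf_eq {G : Type*} [Group G] {p : ℕ} [Fact p.Prime] {A : Subgroup G}
    (hA : ∀ a ∈ A, a ≠ 1 → orderOf a = p) : IsPGroup p A :=
  IsPGroup.iff_orderOf.mpr fun a ↦ by
    by_cases ha : (a : G) = 1
    · exact ⟨0, by rw [pow_zero, orderOf_eq_one_iff]; exact Subtype.ext ha⟩
    · exact ⟨1, by rw [pow_one, ← Subgroup.orderOf_coe a, hA a a.2 ha]⟩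

theorem inf_centralizer_mem_bensonFixedPoset {G : Type*} [Group G] [Finite G] {p : ℕ}
    (hp : p.Prime) {t : G} (ht : orderOf t = p) {A : Subgroup G}
    (hA : A ∈ BensonFixedPoset p t) : A ⊓ centralizer {t} ∈ BensonFixedPoset p t := by
  have : Fact p.Prime := ⟨hp⟩
  obtain ⟨hA₀, hcomm, hord, htA⟩ := hA
  have htP : IsPGroup p (zpowers t) := .of_card (n := 1) (by rw [Nat.card_zpowers, ht, pow_one])
  have hne := (isPGroup_of_orderOf_eq fun a ha h ↦ (hord a ha h).1).inf_centralizer_ne_bot hA₀ htP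
    (zpowers_le.mpr htA)
  rw [zpowers_eq_closure, centralizer_closure] at hne
  exact ⟨hne, fun a ha b hb ↦ hcomm a ha.1 b hb.1, fun a ha ↦ hord a ha.1,
    inf_normalizer_le_normalizer_inf ⟨htA, le_normalizer (mem_centralizer_singleton_iff.mpr rfl)⟩⟩

theorem map_conj_centralizer_singleton {G : Type*} [Group G] {t c : G}
    (hc : c ∈ centralizer {t}) :
    (centralizer {t}).map (MulAut.conj c).toMonoidHom = centralizer {t} :=
  mem_normalizer_iff_map_conj_eq.mp (le_normalizer hc)

/-- Properties of the poset map `f(A) = A ∩ C_G(t)` on the fixed points of `t` acting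
on the Benson complex. -/
theorem stmt_1 {G : Type*} [Group G] [Finite G] (p : ℕ) (hp : p.Prime)
    (t : G) (ht : orderOf t = p) :
    -- (i) `f(A)` is a nontrivial subgroup
    (∀ A ∈ BensonFixedPoset p t, A ⊓ Subgroup.centralizer {t} ≠ ⊥) ∧
    -- (ii) `f(A)` again belongs to the poset
    (∀ A ∈ BensonFixedPoset p t, A ⊓ Subgroup.centralizer {t} ∈ BensonFixedPoset p t) ∧
    -- (iii) `f` is order-preserving, `f(A) ≤ A`, and `f(f(A)) = f(A)`
    (∀ A ∈ BensonFixedPoset p t, ∀ B ∈ BensonFixedPoset p t, A ≤ B →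
      A ⊓ Subgroup.centralizer {t} ≤ B ⊓ Subgroup.centralizer {t}) ∧
    (∀ A ∈ BensonFixedPoset p t, A ⊓ Subgroup.centralizer {t} ≤ A) ∧
    (∀ A ∈ BensonFixedPoset p t,
      (A ⊓ Subgroup.centralizer {t}) ⊓ Subgroup.centralizer {t}
        = A ⊓ Subgroup.centralizer {t}) ∧
    -- (iv) `f` is `C_G(t)`-equivariant
    (∀ A ∈ BensonFixedPoset p t, ∀ c ∈ Subgroup.centralizer {t},
      (Subgroup.map (MulAut.conj c).toMonoidHom A) ⊓ Subgroup.centralizer {t}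
        = Subgroup.map (MulAut.conj c).toMonoidHom (A ⊓ Subgroup.centralizer {t})) ∧
    -- (v) the image of `f` consists exactly of the members of the poset lying in `C_G(t)`
    (∀ B : Subgroup G,
      (B ∈ BensonFixedPoset p t ∧ B ≤ Subgroup.centralizer {t}) ↔
        ∃ A ∈ BensonFixedPoset p t, A ⊓ Subgroup.centralizer {t} = B) := by
  have hf := fun A (hA : A ∈ BensonFixedPoset p t) ↦ inf_centralizer_mem_bensonFixedPoset hp ht hA
  refine ⟨fun A hA ↦ (hf A hA).1, hf, fun _ _ _ _ hAB ↦ inf_le_inf_right _ hAB,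
    fun _ _ ↦ inf_le_left, fun _ _ ↦ by rw [inf_assoc, inf_idem], ?_, fun B ↦ ⟨?_, ?_⟩⟩
  · intro A _ c hc
    rw [map_inf _ _ _ (MulAut.conj c).injective, map_conj_centralizer_singleton hc]
  · rintro ⟨hB, hBt⟩
    exact ⟨B, hB, inf_eq_left.mpr hBt⟩
  · rintro ⟨A, hA, rfl⟩
    exact ⟨hf A hA, inf_le_right⟩
end

section
/- In the alternating group A_7 on seven letters, every element that is a product of two disjoint 3-cycles is contained in exactly one Sylow 3-subgroup of A_7. -/
/-!
A Sylow 3-subgroup of `A₇` has order `9`, so it is abelian, and any one containing `g` lies in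
the centralizer of `g` in `A₇`. The centralizer of `g` in `S₇` has order `1! · 3² · 2! = 18`
and contains an odd permutation (one exchanging the two 3-cycles of `g`), so the centralizer
in `A₇` has order `9`. Being a 3-group that contains `⟨g⟩`, it lies in some Sylow 3-subgroup,
and by maximality it equals every Sylow 3-subgroup containing `g`.
-/

open Equiv Equiv.Perm Subgroup

namespace Subgroup

variable {G : Type*} [Group G]

theorem card_inf_mul_relIndex (H K : Subgroup G) :
    Nat.card (H ⊓ K : Subgroup G) * H.relIndex K = Nat.card K := by
  rw [← relIndex_bot_left, ← relIndex_bot_left, ← inf_relIndex_right H K,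
    relIndex_mul_relIndex _ _ _ bot_le inf_le_right]

theorem relIndex_eq_of_index_prime {H K : Subgroup G} [H.Normal] {p : ℕ} (hp : p.Prime)
    (hH : H.index = p) (hK : ¬K ≤ H) : H.relIndex K = p := by
  have hdvd : H.relIndex K ∣ p := hH ▸ relIndex_dvd_index_of_normal H K
  exact (hp.eq_one_or_self_of_dvd _ hdvd).resolve_left (mt relIndex_eq_one.mp hK)

theorem centralizer_singleton_eq_subgroupOf (H : Subgroup G) (g : H) :
    centralizer {g} = (centralizer {(g : G)}).subgroupOf H := by
  ext x
  simp only [mem_subgroupOf, mem_centralizer_singleton_iff, ← coe_mul, Subtype.ext_iff]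

theorem card_centralizer_mul_relIndex (H : Subgroup G) (g : H) :
    Nat.card (centralizer {g}) * H.relIndex (centralizer {(g : G)}) =
      Nat.card (centralizer {(g : G)}) := by
  rw [centralizer_singleton_eq_subgroupOf, ← card_map_of_injective H.subtype_injective,
    subgroupOf_map_subtype, inf_comm, card_inf_mul_relIndex]

end Subgroup

theorem Sylow.card_subtype_mem_eq_one {G : Type*} [Group G] {p : ℕ} [Fact p.Prime] {g : G}
    (hcomm : ∀ S : Sylow p G, IsMulCommutative S) (hC : IsPGroup p (centralizer {g})) :
    Nat.card {S : Sylow p G // g ∈ S} = 1 := by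
  have centralizer_eq (S : Sylow p G) (hg : g ∈ S) : centralizer {g} = S := by
    have := hcomm S
    exact S.is_maximal' hC
      ((le_centralizer _).trans (centralizer_le (Set.singleton_subset_iff.mpr hg)))
  have hzpowers : IsPGroup p (zpowers g) :=
    hC.to_le (zpowers_le.mpr (mem_centralizer_singleton_iff.mpr rfl))
  obtain ⟨S, hS⟩ := hzpowers.exists_le_sylow
  refine Nat.card_eq_one_iff_unique.mpr ⟨⟨?_⟩, ⟨⟨S, hS (mem_zpowers g)⟩⟩⟩
  rintro ⟨S₁, h₁⟩ ⟨S₂, h₂⟩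
  exact Subtype.ext (Sylow.ext ((centralizer_eq S₁ h₁).symm.trans (centralizer_eq S₂ h₂)))

theorem two_mul_nat_card_centralizer_alternatingGroup {α : Type*} [Fintype α] [DecidableEq α]
    [Nontrivial α] (g : alternatingGroup α)
    (h : ¬centralizer {(g : Perm α)} ≤ alternatingGroup α) :
    2 * Nat.card (centralizer {g}) = Nat.card (centralizer {(g : Perm α)}) := by
  rw [← card_centralizer_mul_relIndex,
    relIndex_eq_of_index_prime Nat.prime_two alternatingGroup.index_eq_two h, mul_comm]

theorem nat_card_sylow_three_alternatingGroup_fin_seven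
    (S : Sylow 3 (alternatingGroup (Fin 7))) : Nat.card S = 3 ^ 2 := by
  rw [S.card_eq_multiplicity, nat_card_alternatingGroup, Nat.card_fin,
    Nat.factorization_def _ Nat.prime_three, show Nat.factorial 7 / 2 = 3 ^ 2 * 280 by rfl,
    padicValNat_base_pow_mul (by norm_num) (by norm_num),
    padicValNat.eq_zero_of_not_dvd (by decide)]

theorem nat_card_centralizer_alternatingGroup_fin_seven (g : alternatingGroup (Fin 7))
    (hg : (g : Perm (Fin 7)).cycleType = {3, 3}) : Nat.card (centralizer {g}) = 3 ^ 2 := by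
  have hnot_le : ¬centralizer {(g : Perm (Fin 7))} ≤ alternatingGroup (Fin 7) := by
    rw [centralizer_le_alternating_iff, hg]
    exact fun h ↦ absurd (h.2.2 3) (by decide)
  have h18 : Nat.card (centralizer {(g : Perm (Fin 7))}) = 18 := by
    rw [nat_card_centralizer, hg]; rfl
  have := two_mul_nat_card_centralizer_alternatingGroup g hnot_le
  omega

/-- In the alternating group `A₇`, every element that is a product of two disjoint
3-cycles (i.e. has cycle type `{3, 3}`) lies in exactly one Sylow 3-subgroup. -/
theorem stmt_17 (g : alternatingGroup (Fin 7))
    (hg : Equiv.Perm.cycleType (g : Equiv.Perm (Fin 7)) = {3, 3}) :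
    Nat.card {S : Sylow 3 (alternatingGroup (Fin 7)) //
      g ∈ (S : Subgroup (alternatingGroup (Fin 7)))} = 1 :=
  Sylow.card_subtype_mem_eq_one
    (fun S ↦ IsPGroup.isMulCommutative_of_card_eq_prime_sq
      (nat_card_sylow_three_alternatingGroup_fin_seven S))
    (IsPGroup.of_card (nat_card_centralizer_alternatingGroup_fin_seven g hg))
end
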